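/- Let X be a binomial random variable with parameters φ·n trials and success probability s/√n, where 0 < φ < θ < 1. Then P(X ≥ θ·s·√n) ≤ exp(−(s·√n·(θ−φ)²)/(θ+φ)), hence P(X ≤ θ·s·√n) ≥ 1 − exp(−(s·√n·(θ−φ)²)/(θ+φ)). -/

import Mathlib

/-!
Exponential Markov inequality: `P(X ≥ a) ≤ e^{-ta} E[e^{tX}]`, and the moment generating function
`E[e^{tX}] = (1 + p(e^t - 1))^N ≤ exp(Np(e^t - 1))`. Putting `e^t = 1 + δ` with `a = (1 + δ)Np` and
using `log(1 + δ) ≥ 2δ/(2 + δ)` gives the Chernoff bound `exp(-δ²Np/(2 + δ))`; with `Np = φs√n`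
and `δ = θ/φ - 1` this is the claimed bound. The lower tail follows because every outcome lies in
one of the two tails.
-/

open scoped Classical

/-- Upper tail `P(X ≥ t)` of a Binomial(N, p) random variable. -/
noncomputable def binomUpperTail (N : ℕ) (p t : ℝ) : ℝ :=
  ∑ i ∈ (Finset.range (N + 1)).filter (fun i : ℕ => t ≤ (i : ℝ)),
    (N.choose i : ℝ) * p ^ i * (1 - p) ^ (N - i)

/-- Lower tail `P(X ≤ t)` of a Binomial(N, p) random variable. -/
noncomputable def binomLowerTail (N : ℕ) (p t : ℝ) : ℝ :=
  ∑ i ∈ (Finset.range (N + 1)).filter (fun i : ℕ => (i : ℝ) ≤ t),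
    (N.choose i : ℝ) * p ^ i * (1 - p) ^ (N - i)

open Finset Real

noncomputable def binomWeight (N : ℕ) (p : ℝ) (i : ℕ) : ℝ :=
  (N.choose i : ℝ) * p ^ i * (1 - p) ^ (N - i)

section Binomial

variable {N : ℕ} {p : ℝ}

lemma binomWeight_nonneg (hp0 : 0 ≤ p) (hp1 : p ≤ 1) (i : ℕ) : 0 ≤ binomWeight N p i := by
  unfold binomWeight
  have : 0 ≤ 1 - p := by linarith
  positivity

lemma sum_binomWeight_mul_pow (N : ℕ) (p c : ℝ) :
    ∑ i ∈ range (N + 1), binomWeight N p i * c ^ i = (p * c + (1 - p)) ^ N := by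
  rw [add_pow]
  refine sum_congr rfl fun i _ => ?_
  rw [binomWeight, mul_pow]
  ring

lemma sum_binomWeight (N : ℕ) (p : ℝ) : ∑ i ∈ range (N + 1), binomWeight N p i = 1 := by
  simpa using sum_binomWeight_mul_pow N p 1

lemma binomUpperTail_le_exp_mul_mgf (hp0 : 0 ≤ p) (hp1 : p ≤ 1) (a : ℝ) {t : ℝ} (ht : 0 ≤ t) :
    binomUpperTail N p a ≤ exp (-(a * t)) * (p * exp t + (1 - p)) ^ N := by
  rw [← sum_binomWeight_mul_pow, mul_sum]
  calc binomUpperTail N p a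
      = ∑ i ∈ (range (N + 1)).filter (fun i : ℕ => a ≤ (i : ℝ)), binomWeight N p i := rfl
    _ ≤ ∑ i ∈ (range (N + 1)).filter (fun i : ℕ => a ≤ (i : ℝ)),
          exp (-(a * t)) * (binomWeight N p i * exp t ^ i) := by
        refine sum_le_sum fun i hi => ?_
        have hai : a ≤ i := (mem_filter.mp hi).2
        have hmarkov : 1 ≤ exp (-(a * t)) * exp t ^ i := by
          rw [← exp_nat_mul, ← exp_add]
          exact one_le_exp (by nlinarith)
        nlinarith [binomWeight_nonneg hp0 hp1 (N := N) i]
    _ ≤ ∑ i ∈ range (N + 1), exp (-(a * t)) * (binomWeight N p i * exp t ^ i) :=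
        sum_le_sum_of_subset_of_nonneg (filter_subset _ _) fun i _ _ => by
          have := binomWeight_nonneg hp0 hp1 (N := N) i
          positivity

lemma binomUpperTail_le_exp (hp0 : 0 ≤ p) (hp1 : p ≤ 1) (a : ℝ) {t : ℝ} (ht : 0 ≤ t) :
    binomUpperTail N p a ≤ exp (N * p * (exp t - 1) - a * t) := by
  have hmgf : (p * exp t + (1 - p)) ^ N ≤ exp (N * (p * (exp t - 1))) := by
    rw [exp_nat_mul]
    refine pow_le_pow_left₀ ?_ ?_ N
    · nlinarith [one_le_exp ht]
    · linarith [add_one_le_exp (p * (exp t - 1))]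
  calc binomUpperTail N p a
      ≤ exp (-(a * t)) * (p * exp t + (1 - p)) ^ N := binomUpperTail_le_exp_mul_mgf hp0 hp1 a ht
    _ ≤ exp (-(a * t)) * exp (N * (p * (exp t - 1))) := by gcongr
    _ = exp (N * p * (exp t - 1) - a * t) := by rw [← exp_add]; ring_nf

theorem binomUpperTail_le_chernoff (hp0 : 0 ≤ p) (hp1 : p ≤ 1) {δ : ℝ} (hδ : 0 ≤ δ) :
    binomUpperTail N p ((1 + δ) * (N * p)) ≤ exp (-(δ ^ 2 * (N * p)) / (2 + δ)) := by
  have hμ : 0 ≤ (N : ℝ) * p := by positivity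
  refine (binomUpperTail_le_exp hp0 hp1 _ (log_nonneg (by linarith : (1 : ℝ) ≤ 1 + δ))).trans ?_
  rw [exp_log (by linarith)]
  gcongr
  have hlog : (1 + δ) * (N * p) * (2 * δ / (δ + 2)) ≤ (1 + δ) * (N * p) * log (1 + δ) :=
    mul_le_mul_of_nonneg_left (le_log_one_add_of_nonneg hδ) (by positivity)
  have hid : N * p * (1 + δ - 1) - (1 + δ) * (N * p) * (2 * δ / (δ + 2))
      = -(δ ^ 2 * (N * p)) / (2 + δ) := by
    field_simp
    ring
  linarith

lemma one_sub_binomUpperTail_le_binomLowerTail (hp0 : 0 ≤ p) (hp1 : p ≤ 1) (t : ℝ) :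
    1 - binomUpperTail N p t ≤ binomLowerTail N p t := by
  have hsplit := sum_filter_add_sum_filter_not (range (N + 1)) (fun i : ℕ => (i : ℝ) ≤ t)
    (binomWeight N p)
  have hrest : ∑ i ∈ (range (N + 1)).filter (fun i : ℕ => ¬(i : ℝ) ≤ t), binomWeight N p i
      ≤ binomUpperTail N p t :=
    sum_le_sum_of_subset_of_nonneg (monotone_filter_right _ fun i _ h => (not_le.mp h).le)
      fun i _ _ => binomWeight_nonneg hp0 hp1 i
  rw [sum_binomWeight] at hsplit
  have : binomLowerTail N p t
      = ∑ i ∈ (range (N + 1)).filter (fun i : ℕ => (i : ℝ) ≤ t), binomWeight N p i := rfl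
  linarith

end Binomial

theorem attack_completeness_chernoff_general (n N : ℕ) (s φ θ : ℝ)
    (hn : 0 < n) (hs : 0 < s)
    (hφ0 : 0 < φ) (hφθ : φ < θ)
    (hN : (N : ℝ) = φ * n)
    (hp : s / Real.sqrt n ≤ 1) :
    binomUpperTail N (s / Real.sqrt n) (θ * s * Real.sqrt n)
        ≤ Real.exp (-(s * Real.sqrt n * (θ - φ) ^ 2) / (θ + φ)) ∧
    1 - Real.exp (-(s * Real.sqrt n * (θ - φ) ^ 2) / (θ + φ))
        ≤ binomLowerTail N (s / Real.sqrt n) (θ * s * Real.sqrt n) := by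
  have hsqrt : 0 < Real.sqrt n := Real.sqrt_pos.mpr (by exact_mod_cast hn)
  have hp0 : 0 ≤ s / Real.sqrt n := by positivity
  have hmean : N * (s / Real.sqrt n) = φ * s * Real.sqrt n := by
    rw [hN]
    field_simp
    rw [Real.sq_sqrt (Nat.cast_nonneg n)]
  have hδ : 0 ≤ θ / φ - 1 := by rw [sub_nonneg, one_le_div hφ0]; exact hφθ.le
  have hupper := binomUpperTail_le_chernoff (N := N) hp0 hp hδ
  have ha : (1 + (θ / φ - 1)) * (N * (s / Real.sqrt n)) = θ * s * Real.sqrt n := by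
    rw [hmean]; field_simp; ring
  have hexp : -((θ / φ - 1) ^ 2 * (N * (s / Real.sqrt n))) / (2 + (θ / φ - 1))
      = -(s * Real.sqrt n * (θ - φ) ^ 2) / (θ + φ) := by
    rw [hmean]; field_simp; ring
  rw [ha, hexp] at hupper
  have hlower := one_sub_binomUpperTail_le_binomLowerTail (N := N) hp0 hp (θ * s * Real.sqrt n)
  exact ⟨hupper, by linarith⟩

/-- Chernoff upper-tail bound for X ~ Binomial(φ·n, s/√n):
P(X ≥ θ·s·√n) ≤ exp(−s√n(θ−φ)²/(θ+φ)), hence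
P(X ≤ θ·s·√n) ≥ 1 − exp(−s√n(θ−φ)²/(θ+φ)). -/
theorem attack_completeness_chernoff (n N : ℕ) (s φ θ : ℝ)
    (hn : 0 < n) (hs : 0 < s)
    (hφ0 : 0 < φ) (hφθ : φ < θ) (hθ1 : θ < 1)
    (hN : (N : ℝ) = φ * n)
    (hp : s / Real.sqrt n ≤ 1) :
    binomUpperTail N (s / Real.sqrt n) (θ * s * Real.sqrt n)
        ≤ Real.exp (-(s * Real.sqrt n * (θ - φ) ^ 2) / (θ + φ)) ∧
    1 - Real.exp (-(s * Real.sqrt n * (θ - φ) ^ 2) / (θ + φ))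
        ≤ binomLowerTail N (s / Real.sqrt n) (θ * s * Real.sqrt n) :=
  attack_completeness_chernoff_general n N s φ θ hn hs hφ0 hφθ hN hp
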